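/- arXiv:1603.05238 — 4 statements merged into one kernel-verified Lean document; each statement's English description precedes it below -/
import Mathlib

section
/- Let A ⊆ ℝⁿ be a measurable set of finite positive Lebesgue measure V, and let X be uniformly distributed on A. Then E[‖X‖_∞] ≥ (1/8)·V^{1/n}. -/
/-!
Markov's inequality on `A`: the points of `A` with `‖x‖_∞ < r` lie in a cube of side `2r`.
For `r = V^{1/n} / 4` that cube has volume `2^{-n} V ≤ V / 2`, so at least half of `A` has
`‖x‖_∞ ≥ r`, and hence `∫_A ‖x‖_∞ ≥ r · V / 2 = V^{1/n} V / 8`.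
-/

open MeasureTheory Metric ENNReal

theorem half_le_measure_diff_of_measure_le_half {α : Type*} [MeasurableSpace α]
    {μ : Measure α} {s t : Set α} (hs : μ s ≠ ∞) (ht : μ t ≤ μ s / 2) :
    μ s / 2 ≤ μ (s \ t) :=
  calc μ s / 2 = μ s - μ s / 2 := (ENNReal.sub_half hs).symm
    _ ≤ μ s - μ t := by gcongr
    _ ≤ μ (s \ t) := le_measure_sdiff

theorem mul_half_le_setLIntegral_of_measure_lt_le_half {α : Type*} [MeasurableSpace α]
    {μ : Measure α} {s : Set α} {f : α → ℝ≥0∞} (hf : AEMeasurable f (μ.restrict s))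
    (hs : μ s ≠ ∞) {ε : ℝ≥0∞} (hε : μ (s ∩ {x | f x < ε}) ≤ μ s / 2) :
    ε * (μ s / 2) ≤ ∫⁻ x in s, f x ∂μ := by
  have hdiff : s \ (s ∩ {x | f x < ε}) = {x | ε ≤ f x} ∩ s := by
    ext x
    simp [and_comm]
  calc ε * (μ s / 2) ≤ ε * μ (s \ (s ∩ {x | f x < ε})) := by
        gcongr
        exact half_le_measure_diff_of_measure_le_half hs hε
    _ ≤ ε * μ.restrict s {x | ε ≤ f x} := by
        rw [hdiff]
        gcongr ε * ?_
        exact Measure.le_restrict_apply _ _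
    _ ≤ ∫⁻ x in s, f x ∂μ := mul_meas_ge_le_lintegral₀ hf ε

theorem Real.volume_pi_closedBall_rpow_inv_card_div_four_le {ι : Type*} [Fintype ι]
    [Nonempty ι] (a : ι → ℝ) {V : ℝ≥0∞} (hV : V ≠ ∞) :
    volume (closedBall a (V.toReal ^ (Fintype.card ι : ℝ)⁻¹ / 4)) ≤ V / 2 := by
  set N := Fintype.card ι
  have hN : N ≠ 0 := Fintype.card_ne_zero
  rw [Real.volume_pi_closedBall _ (by positivity)]
  calc ENNReal.ofReal ((2 * (V.toReal ^ (N : ℝ)⁻¹ / 4)) ^ N)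
        = ENNReal.ofReal (V.toReal / 2 ^ N) := by
        rw [show 2 * (V.toReal ^ (N : ℝ)⁻¹ / 4) = V.toReal ^ (N : ℝ)⁻¹ / 2 by ring,
          div_pow, Real.rpow_inv_natCast_pow ENNReal.toReal_nonneg hN]
    _ ≤ ENNReal.ofReal (V.toReal / 2) := by
        gcongr
        exact le_self_pow₀ one_le_two hN
    _ = V / 2 := by
        rw [ENNReal.ofReal_div_of_pos two_pos, ENNReal.ofReal_toReal hV, ENNReal.ofReal_ofNat]

theorem stmt_1_general (n : ℕ) (hn : 0 < n) (A : Set (Fin n → ℝ))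
    (hfin : volume A < ⊤) :
    ENNReal.ofReal ((1 / 8) * (volume A).toReal ^ ((1 : ℝ) / n)) * volume A
      ≤ ∫⁻ x in A, (‖x‖₊ : ENNReal) ∂volume := by
  have : Nonempty (Fin n) := ⟨⟨0, hn⟩⟩
  set r := (volume A).toReal ^ ((n : ℝ)⁻¹) / 4
  have hsmall :
      volume (A ∩ {x | (‖x‖₊ : ℝ≥0∞) < ENNReal.ofReal r}) ≤ volume A / 2 := by
    refine le_trans (measure_mono fun x hx => ?_)
      (Fintype.card_fin n ▸ Real.volume_pi_closedBall_rpow_inv_card_div_four_le 0 hfin.ne)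
    have hlt : ‖x‖ < r := by simpa using hx.2
    exact mem_closedBall_zero_iff.2 hlt.le
  calc ENNReal.ofReal ((1 / 8) * (volume A).toReal ^ ((1 : ℝ) / n)) * volume A
      = ENNReal.ofReal r * (volume A / 2) := by
        rw [one_div (n : ℝ), show 1 / 8 * (volume A).toReal ^ (n : ℝ)⁻¹ = r * 2⁻¹ by ring,
          ENNReal.ofReal_mul (by positivity), ENNReal.ofReal_inv_of_pos two_pos,
          ENNReal.ofReal_ofNat, ENNReal.div_eq_inv_mul]
        ring
    _ ≤ ∫⁻ x in A, (‖x‖₊ : ENNReal) ∂volume :=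
        mul_half_le_setLIntegral_of_measure_lt_le_half
          measurable_nnnorm.coe_nnreal_ennreal.aemeasurable hfin.ne hsmall

/-- If `X` is uniform on a measurable set `A ⊆ ℝⁿ` of finite positive Lebesgue measure `V`,
then `E[‖X‖_∞] ≥ (1/8) V^{1/n}` (stated as `∫⁻_A ‖x‖_∞ ≥ (1/8) V^{1/n} · V`). -/
theorem stmt_1 (n : ℕ) (hn : 0 < n) (A : Set (Fin n → ℝ)) (hA : MeasurableSet A)
    (h0 : 0 < volume A) (hfin : volume A < ⊤) :
    ENNReal.ofReal ((1 / 8) * (volume A).toReal ^ ((1 : ℝ) / n)) * volume A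
      ≤ ∫⁻ x in A, (‖x‖₊ : ENNReal) ∂volume :=
  stmt_1_general n hn A hfin
end

section
/- For v ∈ ℤⁿ and k ∈ ℤ define the hypercube C_{k,v} = 2^{-k}([0,1]ⁿ + v). For any set A ⊆ ℝⁿ, the collection of hypercubes C_{k,v} with v ∈ D_k(A) := {v ∈ ℤⁿ : C_{k,v} ⊆ A and C_{k-1,⌊v/2⌋} ⊄ A}, ranging over all k ∈ ℤ, covers the interior of A, and the interiors of two distinct such hypercubes are disjoint. -/
open MeasureTheory

/-- The dyadic hypercube `C_{k,v} = 2^{-k}([0,1]ⁿ + v)`. -/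
def dyadicCube (n : ℕ) (k : ℤ) (v : Fin n → ℤ) : Set (Fin n → ℝ) :=
  {x | ∀ i, (2 : ℝ) ^ (-k) * (v i : ℝ) ≤ x i ∧ x i ≤ (2 : ℝ) ^ (-k) * ((v i : ℝ) + 1)}

lemma cube_eq_pi (n : ℕ) (k : ℤ) (v : Fin n → ℤ) : dyadicCube n k v =
    Set.univ.pi (fun i => Set.Icc ((2:ℝ)^(-k) * (v i : ℝ)) ((2:ℝ)^(-k) * ((v i : ℝ) + 1))) := by
  ext x; simp [dyadicCube, Set.mem_pi, forall_and, Pi.le_def]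

lemma interior_cube (n : ℕ) (k : ℤ) (v : Fin n → ℤ) : interior (dyadicCube n k v) =
    Set.univ.pi (fun i => Set.Ioo ((2:ℝ)^(-k) * (v i : ℝ)) ((2:ℝ)^(-k) * ((v i : ℝ) + 1))) := by
  rw [cube_eq_pi, interior_pi_set Set.finite_univ]
  simp

lemma volume_cube (n : ℕ) (k : ℤ) (v : Fin n → ℤ) :
    volume (dyadicCube n k v) = (ENNReal.ofReal ((2:ℝ)^(-k)))^n := by
  rw [cube_eq_pi, volume_pi_pi]
  rw [Finset.prod_congr rfl (fun i _ => ?_), Finset.prod_const, Finset.card_univ, Fintype.card_fin]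
  rw [Real.volume_Icc]; ring_nf

lemma int_sandwich {a : ℤ} {t : ℝ} {b c : ℤ} (h1 : (a:ℝ) < t) (h2 : t < a + 1)
    (h3 : (b:ℝ) < t) (h4 : t < c) : (b:ℝ) ≤ a ∧ (a:ℝ) + 1 ≤ c := by
  constructor
  · exact_mod_cast Int.lt_add_one_iff.mp (by exact_mod_cast h3.trans h2)
  · exact_mod_cast Int.add_one_le_iff.mpr (by exact_mod_cast h1.trans h4)

lemma overlap1 {j k : ℤ} (hjk : j ≤ k) {a b : ℤ} {t : ℝ}
    (h1 : (2:ℝ)^(-k)*a < t) (h2 : t < (2:ℝ)^(-k)*((a:ℝ)+1))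
    (h3 : (2:ℝ)^(-j)*b < t) (h4 : t < (2:ℝ)^(-j)*((b:ℝ)+1)) :
    (2:ℝ)^(-j)*b ≤ (2:ℝ)^(-k)*a ∧ (2:ℝ)^(-k)*((a:ℝ)+1) ≤ (2:ℝ)^(-j)*((b:ℝ)+1) := by
  set m : ℕ := (k - j).toNat with hm
  have hkj : (-j : ℤ) = -k + m := by omega
  have hpow : (2:ℝ)^(-j) = (2:ℝ)^(-k) * (2:ℝ)^(m:ℤ) := by
    rw [hkj, zpow_add₀ (by norm_num : (2:ℝ) ≠ 0)]
  have h2m : ((2:ℤ)^m : ℝ) = (2:ℝ)^(m:ℤ) := by push_cast; rw [zpow_natCast]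
  have hpos : (0:ℝ) < (2:ℝ)^(-k) := zpow_pos (by norm_num) _
  -- rescale: s := 2^k * t
  set s : ℝ := (2:ℝ)^(k) * t with hs
  have key : ∀ u : ℝ, (2:ℝ)^(-k) * u < t ↔ u < s := by
    intro u
    rw [hs, zpow_neg, inv_mul_lt_iff₀ (zpow_pos (by norm_num) _)]
  have key' : ∀ u : ℝ, t < (2:ℝ)^(-k) * u ↔ s < u := by
    intro u
    rw [hs, zpow_neg, lt_inv_mul_iff₀ (zpow_pos (by norm_num) _)]
  have H1 : (a:ℝ) < s := (key _).mp h1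
  have H2 : s < (a:ℝ) + 1 := (key' _).mp h2
  have H3 : (((2:ℤ)^m * b : ℤ) : ℝ) < s := by
    apply (key _).mp
    push_cast [h2m]
    calc (2:ℝ)^(-k) * ((2:ℝ)^(m:ℤ) * b) = (2:ℝ)^(-j) * b := by rw [hpow]; ring
    _ < t := h3
  have H4 : s < (((2:ℤ)^m * (b+1) : ℤ) : ℝ) := by
    apply (key' _).mp
    push_cast [h2m]
    calc t < (2:ℝ)^(-j) * ((b:ℝ)+1) := h4
    _ = (2:ℝ)^(-k) * ((2:ℝ)^(m:ℤ) * ((b:ℝ)+1)) := by rw [hpow]; ring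
  obtain ⟨hle1, hle2⟩ := int_sandwich H1 H2 H3 H4
  constructor
  · calc (2:ℝ)^(-j)*b = (2:ℝ)^(-k) * (((2:ℤ)^m * b : ℤ) : ℝ) := by
          push_cast; rw [hpow]; simp only [← zpow_natCast]; ring
    _ ≤ (2:ℝ)^(-k)*a := by apply mul_le_mul_of_nonneg_left hle1 hpos.le
  · calc (2:ℝ)^(-k)*((a:ℝ)+1) ≤ (2:ℝ)^(-k) * (((2:ℤ)^m * (b+1) : ℤ) : ℝ) := by
          apply mul_le_mul_of_nonneg_left ?_ hpos.le
          exact_mod_cast hle2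
    _ = (2:ℝ)^(-j)*((b:ℝ)+1) := by push_cast; rw [hpow]; simp only [← zpow_natCast]; ring

lemma cube_subset_of_mem_interiors {n : ℕ} {j k : ℤ} (hjk : j ≤ k) {v u : Fin n → ℤ}
    {x : Fin n → ℝ} (hx1 : x ∈ interior (dyadicCube n k v)) (hx2 : x ∈ interior (dyadicCube n j u)) :
    dyadicCube n k v ⊆ dyadicCube n j u := by
  rw [interior_cube] at hx1 hx2
  intro y hy i
  have h1 := hx1 i (Set.mem_univ i)
  have h2 := hx2 i (Set.mem_univ i)
  obtain ⟨hle1, hle2⟩ := overlap1 hjk h1.1 h1.2 h2.1 h2.2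
  exact ⟨hle1.trans (hy i).1, (hy i).2.trans hle2⟩

lemma fdiv_bounds (a : ℤ) : 2 * (a.fdiv 2) ≤ a ∧ a ≤ 2 * (a.fdiv 2) + 1 := by
  rw [Int.fdiv_eq_ediv_of_nonneg _ (by norm_num)]
  omega

lemma cube_subset_parent (n : ℕ) (k : ℤ) (v : Fin n → ℤ) :
    dyadicCube n k v ⊆ dyadicCube n (k - 1) (fun i => Int.fdiv (v i) 2) := by
  intro x hx i
  obtain ⟨h1, h2⟩ := hx i
  obtain ⟨hf1, hf2⟩ := fdiv_bounds (v i)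
  have hpow : (2:ℝ)^(-(k-1)) = 2 * (2:ℝ)^(-k) := by
    rw [show -(k-1) = 1 + -k by ring, zpow_add₀ (by norm_num : (2:ℝ) ≠ 0), zpow_one]
  have hpos : (0:ℝ) < (2:ℝ)^(-k) := zpow_pos (by norm_num) _
  have hf1' : (2:ℝ) * ((v i).fdiv 2 : ℝ) ≤ (v i : ℝ) := by exact_mod_cast hf1
  have hf2' : (v i : ℝ) ≤ 2 * ((v i).fdiv 2 : ℝ) + 1 := by exact_mod_cast hf2
  have m1 := mul_le_mul_of_nonneg_left hf1' hpos.le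
  have m2 := mul_le_mul_of_nonneg_left hf2' hpos.le
  constructor
  · simp only [hpow]; nlinarith
  · simp only [hpow]; nlinarith

lemma mem_floorCube {n : ℕ} (k : ℤ) (x : Fin n → ℝ) :
    x ∈ dyadicCube n k (fun i => ⌊(2:ℝ)^k * x i⌋) := by
  intro i
  have hpos : (0:ℝ) < (2:ℝ)^k := zpow_pos (by norm_num) _
  have hinv : (2:ℝ)^(-k) = ((2:ℝ)^k)⁻¹ := zpow_neg 2 k
  constructor
  · rw [hinv, inv_mul_le_iff₀ hpos]
    exact Int.floor_le _
  · rw [hinv, le_inv_mul_iff₀ hpos]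
    exact (Int.lt_floor_add_one _).le

lemma floor_half (t : ℝ) : ⌊t / 2⌋ = Int.fdiv ⌊t⌋ 2 := by
  obtain ⟨h1, h2⟩ := fdiv_bounds ⌊t⌋
  rw [Int.floor_eq_iff]
  constructor
  · have : ((2 * ⌊t⌋.fdiv 2 : ℤ) : ℝ) ≤ t := le_trans (by exact_mod_cast h1) (Int.floor_le t)
    push_cast at this ⊢; linarith
  · have : t < ((2 * ⌊t⌋.fdiv 2 + 2 : ℤ) : ℝ) :=
      lt_of_lt_of_le (Int.lt_floor_add_one t) (by exact_mod_cast (by omega : ⌊t⌋ + 1 ≤ 2 * ⌊t⌋.fdiv 2 + 2))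
    push_cast at this ⊢; linarith

lemma floorCube_parent {n : ℕ} (k : ℤ) (x : Fin n → ℝ) :
    (fun i => ⌊(2:ℝ)^(k-1) * x i⌋) = (fun i => Int.fdiv ⌊(2:ℝ)^k * x i⌋ 2) := by
  funext i
  rw [← floor_half]
  congr 1
  rw [show k - 1 = k + (-1) by ring, zpow_add₀ (by norm_num : (2:ℝ) ≠ 0)]
  ring

lemma cube_subset_ball {n : ℕ} (k : ℤ) (x : Fin n → ℝ) {ε : ℝ} (hε : (2:ℝ)^(-k) < ε) :
    dyadicCube n k (fun i => ⌊(2:ℝ)^k * x i⌋) ⊆ Metric.ball x ε := by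
  intro y hy
  have hx := mem_floorCube k x
  have hd : dist y x ≤ (2:ℝ)^(-k) := by
    rw [dist_pi_le_iff (zpow_pos (by norm_num) _).le]
    intro i
    obtain ⟨a1, a2⟩ := hy i
    obtain ⟨b1, b2⟩ := hx i
    rw [Real.dist_eq, abs_sub_le_iff]
    constructor <;> nlinarith
  exact Metric.mem_ball.mpr (lt_of_le_of_lt hd hε)

lemma level_lb {n : ℕ} (hn : 0 < n) {A : Set (Fin n → ℝ)} (hfin : volume A ≠ ⊤) :
    ∃ b : ℤ, ∀ k : ℤ, ∀ v : Fin n → ℤ, dyadicCube n k v ⊆ A → b ≤ k := by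
  obtain ⟨N, hN⟩ := pow_unbounded_of_one_lt (volume A).toReal (one_lt_two (α := ℝ))
  refine ⟨-(N:ℤ), fun k v hsub => ?_⟩
  by_contra hk
  push_neg at hk
  have hk' : (N:ℤ) ≤ -k := by omega
  have h1 : (1:ℝ) ≤ (2:ℝ)^(-k) := one_le_zpow₀ (by norm_num) (by omega)
  have hvol : volume (dyadicCube n k v) ≤ volume A := measure_mono hsub
  rw [volume_cube] at hvol
  have h2 : ENNReal.ofReal ((2:ℝ)^(-k)) ≤ (ENNReal.ofReal ((2:ℝ)^(-k)))^n :=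
    le_self_pow₀ (ENNReal.one_le_ofReal.mpr h1) hn.ne'
  have h3 : ENNReal.ofReal ((2:ℝ)^(-k)) ≤ volume A := h2.trans hvol
  have h4 : (2:ℝ)^(-k) ≤ (volume A).toReal :=
    (ENNReal.ofReal_le_iff_le_toReal hfin).mp h3
  have h5 : (2:ℝ)^(N:ℤ) ≤ (2:ℝ)^(-k) := zpow_le_zpow_right₀ (by norm_num) hk'
  rw [zpow_natCast] at h5
  linarith

/-- `D_k(A)`: positions of the maximal dyadic hypercubes of side `2^{-k}` contained in `A`. -/
def dyadicFamily (n : ℕ) (A : Set (Fin n → ℝ)) (k : ℤ) : Set (Fin n → ℤ) :=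
  {v | dyadicCube n k v ⊆ A ∧ ¬ dyadicCube n (k - 1) (fun i => Int.fdiv (v i) 2) ⊆ A}

lemma disjoint_lt {n : ℕ} (A : Set (Fin n → ℝ)) {k k' : ℤ} (hkk : k < k')
    (v v' : Fin n → ℤ) (hv : v ∈ dyadicFamily n A k) (hv' : v' ∈ dyadicFamily n A k') :
    interior (dyadicCube n k v) ∩ interior (dyadicCube n k' v') = ∅ := by
  by_contra h
  obtain ⟨x, hx1, hx2⟩ := Set.nonempty_iff_ne_empty.mpr h
  have hxp : x ∈ interior (dyadicCube n (k'-1) (fun i => Int.fdiv (v' i) 2)) :=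
    interior_mono (cube_subset_parent n k' v') hx2
  have hsub : dyadicCube n (k'-1) (fun i => Int.fdiv (v' i) 2) ⊆ dyadicCube n k v :=
    cube_subset_of_mem_interiors (by omega) hxp hx1
  exact hv'.2 (hsub.trans hv.1)

/-- The dyadic decomposition covers the interior of `A`, and distinct hypercubes in the
decomposition have disjoint interiors. -/
theorem stmt_2 (n : ℕ) (hn : 0 < n) (A : Set (Fin n → ℝ)) (hfin : volume A ≠ ⊤) :
    (interior A ⊆ ⋃ (k : ℤ), ⋃ v ∈ dyadicFamily n A k, dyadicCube n k v) ∧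
    (∀ k k' : ℤ, ∀ v v' : Fin n → ℤ, v ∈ dyadicFamily n A k → v' ∈ dyadicFamily n A k' →
      (k, v) ≠ (k', v') →
      interior (dyadicCube n k v) ∩ interior (dyadicCube n k' v') = ∅) := by
  constructor
  · -- covering
    intro x hx
    obtain ⟨ε, hε, hball⟩ := Metric.isOpen_iff.mp isOpen_interior x hx
    have hball' : Metric.ball x ε ⊆ A := hball.trans interior_subset
    obtain ⟨N0, hN0⟩ := pow_unbounded_of_one_lt (1/ε) (one_lt_two (α := ℝ))
    have hsmall : (2:ℝ)^(-(N0:ℤ)) < ε := by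
      rw [zpow_neg, zpow_natCast, inv_lt_comm₀ (by positivity) hε]
      simpa [one_div] using hN0
    set P : ℤ → Prop := fun k => dyadicCube n k (fun i => ⌊(2:ℝ)^k * x i⌋) ⊆ A with hP
    have hPN : P (N0:ℤ) := (cube_subset_ball _ x hsmall).trans hball'
    obtain ⟨b, hb⟩ := level_lb hn hfin
    obtain ⟨k0, hk0P, hk0min⟩ := Int.exists_least_of_bdd (P := P)
      ⟨b, fun z hz => hb z _ hz⟩ ⟨(N0:ℤ), hPN⟩
    have hpar : ¬ dyadicCube n (k0 - 1)
        (fun i => Int.fdiv ⌊(2:ℝ)^k0 * x i⌋ 2) ⊆ A := by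
      intro hcon
      have hP1 : P (k0 - 1) := by
        rw [hP]
        simpa [floorCube_parent k0 x] using hcon
      have := hk0min _ hP1
      omega
    refine Set.mem_iUnion.mpr ⟨k0, Set.mem_iUnion₂.mpr ⟨_, ⟨hk0P, hpar⟩, mem_floorCube k0 x⟩⟩
  · -- disjointness
    intro k k' v v' hv hv' hne
    rcases lt_trichotomy k k' with hlt | heq | hgt
    · exact disjoint_lt A hlt v v' hv hv'
    · subst heq
      have hvv : v ≠ v' := by
        intro h; exact hne (by rw [h])
      obtain ⟨i, hi⟩ := Function.ne_iff.mp hvv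
      by_contra h
      obtain ⟨x, hx1, hx2⟩ := Set.nonempty_iff_ne_empty.mpr h
      rw [interior_cube] at hx1 hx2
      obtain ⟨a1, a2⟩ := hx1 i (Set.mem_univ i)
      obtain ⟨b1, b2⟩ := hx2 i (Set.mem_univ i)
      have hpos : (0:ℝ) < (2:ℝ)^(-k) := zpow_pos (by norm_num) _
      have c1 : (v i : ℝ) < (v' i : ℝ) + 1 :=
        lt_of_mul_lt_mul_left (by linarith : (2:ℝ)^(-k) * (v i : ℝ) < (2:ℝ)^(-k) * ((v' i : ℝ) + 1)) hpos.le
      have c2 : (v' i : ℝ) < (v i : ℝ) + 1 :=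
        lt_of_mul_lt_mul_left (by linarith : (2:ℝ)^(-k) * (v' i : ℝ) < (2:ℝ)^(-k) * ((v i : ℝ) + 1)) hpos.le
      have d1 : v i < v' i + 1 := by exact_mod_cast c1
      have d2 : v' i < v i + 1 := by exact_mod_cast c2
      exact hi (by omega)
    · rw [Set.inter_comm]
      exact disjoint_lt A hgt v' v hv' hv
end

section
/- Let X be a nonnegative random variable with finite expectation and Z any random variable. Then E_Z[max{log₂ E[X | Z], 0}] ≤ max{log₂ E[X], 0} + e^{-1}·log₂ e. -/
/-!
For `a > 0`, the tangent-line bound `log s ≤ s / e` at `s = t / a` gives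
`max (log₂ t) 0 ≤ max (log₂ a) 0 + log₂ e / (e a) · t` for all `t ≥ 0`.
Integrating this over `t = E[X | m]`, whose mean is `E[X]` by the tower property, and choosing
`a = E[X]` (or `a = 1` when `E[X] = 0`) yields the bound. The line plays the role of a supporting
line of the concave majorant of `max (log₂ t) 0` in the Jensen argument.
-/

open MeasureTheory Real

lemma Real.log_le_div_exp {x : ℝ} (hx : 0 < x) : log x ≤ x / exp 1 := by
  have h := log_le_sub_one_of_pos (div_pos hx (exp_pos 1))
  rw [log_div hx.ne' (exp_pos 1).ne', log_exp] at h
  linarith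

lemma Real.log_le_log_add_div {a t : ℝ} (ha : 0 < a) (ht : 0 < t) :
    log t ≤ log a + t / (exp 1 * a) := by
  have h := log_le_div_exp (div_pos ht ha)
  rw [log_div ht.ne' ha.ne', div_div, mul_comm a] at h
  linarith

lemma Real.logb_le_logb_add_mul {b a t : ℝ} (hb : 1 < b) (ha : 0 < a) (ht : 0 < t) :
    logb b t ≤ logb b a + logb b (exp 1) / (exp 1 * a) * t := by
  have hlogb : 0 < log b := log_pos hb
  have h : logb b a + logb b (exp 1) / (exp 1 * a) * t = (log a + t / (exp 1 * a)) / log b := by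
    simp only [logb, log_exp]
    field_simp
  rw [h, logb]
  gcongr
  exact log_le_log_add_div ha ht

lemma Real.max_logb_le_max_logb_add_mul {b a t : ℝ} (hb : 1 < b) (ha : 0 < a) (ht : 0 ≤ t) :
    max (logb b t) 0 ≤ max (logb b a) 0 + logb b (exp 1) / (exp 1 * a) * t := by
  have hslope : 0 ≤ logb b (exp 1) / (exp 1 * a) * t := by
    have : 0 < logb b (exp 1) := logb_pos hb (one_lt_exp_iff.mpr one_pos)
    positivity
  refine max_le ?_ (by linarith [le_max_right (logb b a) 0])
  rcases ht.eq_or_lt with rfl | htpos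
  · simp only [logb_zero, mul_zero, add_zero]
    exact le_max_right _ _
  · linarith [logb_le_logb_add_mul hb ha htpos, le_max_left (logb b a) 0]

namespace MeasureTheory

variable {Ω : Type*} {mΩ : MeasurableSpace Ω} {μ : Measure Ω} [IsProbabilityMeasure μ]
  {Y : Ω → ℝ} {b : ℝ}

lemma integral_max_logb_le_of_pos (hY0 : 0 ≤ᵐ[μ] Y) (hYi : Integrable Y μ) (hb : 1 < b)
    {a : ℝ} (ha : 0 < a) :
    ∫ ω, max (logb b (Y ω)) 0 ∂μ
      ≤ max (logb b a) 0 + logb b (exp 1) / (exp 1 * a) * ∫ ω, Y ω ∂μ := by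
  have hbound : (fun ω ↦ max (logb b (Y ω)) 0)
      ≤ᵐ[μ] fun ω ↦ max (logb b a) 0 + logb b (exp 1) / (exp 1 * a) * Y ω := by
    filter_upwards [hY0] with ω hω
    exact max_logb_le_max_logb_add_mul hb ha hω
  calc ∫ ω, max (logb b (Y ω)) 0 ∂μ
      ≤ ∫ ω, (max (logb b a) 0 + logb b (exp 1) / (exp 1 * a) * Y ω) ∂μ :=
        integral_mono_of_nonneg (ae_of_all _ fun _ ↦ le_max_right _ _)
          ((integrable_const _).add (hYi.const_mul _)) hbound
    _ = max (logb b a) 0 + logb b (exp 1) / (exp 1 * a) * ∫ ω, Y ω ∂μ := by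
        rw [integral_add (integrable_const _) (hYi.const_mul _), integral_const, integral_const_mul]
        simp

lemma integral_max_logb_le (hY0 : 0 ≤ᵐ[μ] Y) (hYi : Integrable Y μ) (hb : 1 < b) :
    ∫ ω, max (logb b (Y ω)) 0 ∂μ
      ≤ max (logb b (∫ ω, Y ω ∂μ)) 0 + (exp 1)⁻¹ * logb b (exp 1) := by
  have hc : 0 < (exp 1)⁻¹ * logb b (exp 1) :=
    mul_pos (by positivity) (logb_pos hb (one_lt_exp_iff.mpr one_pos))
  rcases (integral_nonneg_of_ae hY0).eq_or_lt with hzero | hpos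
  · have h := integral_max_logb_le_of_pos hY0 hYi hb one_pos
    rw [← hzero] at h ⊢
    simp only [logb_one, logb_zero, max_self, mul_zero, add_zero, zero_add] at h ⊢
    linarith
  · have h := integral_max_logb_le_of_pos hY0 hYi hb hpos
    rwa [div_mul_eq_mul_div, mul_div_mul_right _ _ hpos.ne', div_eq_inv_mul] at h

end MeasureTheory

theorem stmt_9_general {Ω : Type*} {mΩ : MeasurableSpace Ω} (μ : Measure Ω) [IsProbabilityMeasure μ]
    (m : MeasurableSpace Ω) (hm : m ≤ mΩ) (X : Ω → ℝ) (hX0 : 0 ≤ X) :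
    ∫ ω, max (Real.logb 2 ((μ[X|m]) ω)) 0 ∂μ
      ≤ max (Real.logb 2 (∫ ω, X ω ∂μ)) 0 + (Real.exp 1)⁻¹ * Real.logb 2 (Real.exp 1) := by
  have h := integral_max_logb_le (condExp_nonneg (m := m) (ae_of_all μ hX0))
    integrable_condExp one_lt_two
  rwa [integral_condExp hm] at h

/-- For a nonnegative integrable random variable `X` and sub-σ-algebra `m`,
`E[max{log₂ E[X|m], 0}] ≤ max{log₂ E[X], 0} + e⁻¹ log₂ e`. -/
theorem stmt_9 {Ω : Type*} {mΩ : MeasurableSpace Ω} (μ : Measure Ω) [IsProbabilityMeasure μ]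
    (m : MeasurableSpace Ω) (hm : m ≤ mΩ) (X : Ω → ℝ) (hX0 : 0 ≤ X)
    (hXi : Integrable X μ) :
    ∫ ω, max (Real.logb 2 ((μ[X|m]) ω)) 0 ∂μ
      ≤ max (Real.logb 2 (∫ ω, X ω ∂μ)) 0 + (Real.exp 1)⁻¹ * Real.logb 2 (Real.exp 1) :=
  stmt_9_general μ m hm X hX0
end

section
/- Let f : ℝⁿ → [0,∞) be continuous at almost every point (with respect to Lebesgue measure). Then for all but countably many z > 0, the boundary of the superlevel set L_z⁺(f) = {x : f(x) ≥ z} has Lebesgue measure zero. In particular, ∂L_z⁺(f) has measure zero for almost every z ≥ 0. -/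
/-!
At a continuity point `x` of `f`, lying on the frontier of `{f ≥ z}` forces `f x = z`: `x` is a
limit both of points with `f ≥ z` and of points with `f < z`. Hence the frontiers for distinct
levels meet only in discontinuity points, a null set, and a σ-finite measure admits only countably
many pairwise a.e.-disjoint sets of positive measure.
-/

open Function MeasureTheory Set

section Frontier

variable {X α : Type*} [TopologicalSpace X] [LinearOrder α] [TopologicalSpace α]
  [OrderClosedTopology α] {f : X → α} {x : X} {z : α}

theorem ContinuousAt.eq_of_mem_frontier_setOf_le (hf : ContinuousAt f x)
    (hx : x ∈ frontier {y | z ≤ f y}) : f x = z := by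
  have hge : f x ∈ Ici z :=
    closure_minimal (image_subset_iff.2 fun _ hy => hy) isClosed_Ici (mem_closure_image hf hx.1)
  have hx' : x ∈ closure {y | z ≤ f y}ᶜ := by
    rw [closure_compl]
    exact hx.2
  have hle : f x ∈ Iic z :=
    closure_minimal (image_subset_iff.2 fun _ hy => (not_le.1 hy).le) isClosed_Iic
      (mem_closure_image hf hx')
  exact le_antisymm hle hge

variable [MeasurableSpace X]

theorem aedisjoint_frontier_setOf_le {μ : Measure X} (hf : ∀ᵐ x ∂μ, ContinuousAt f x) :
    Pairwise (AEDisjoint μ on fun z => frontier {x | z ≤ f x}) := by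
  intro z₁ z₂ hne
  refine measure_mono_null (fun x hx (hcont : ContinuousAt f x) => hne ?_) (ae_iff.1 hf)
  rw [← hcont.eq_of_mem_frontier_setOf_le hx.1, hcont.eq_of_mem_frontier_setOf_le hx.2]

theorem countable_setOf_measure_frontier_setOf_le_ne_zero [OpensMeasurableSpace X]
    {μ : Measure X} [SFinite μ] (hf : ∀ᵐ x ∂μ, ContinuousAt f x) :
    {z | μ (frontier {x | z ≤ f x}) ≠ 0}.Countable := by
  simpa only [pos_iff_ne_zero] using Measure.countable_meas_pos_of_disjoint_iUnion₀
    (fun _ => isClosed_frontier.nullMeasurableSet) (aedisjoint_frontier_setOf_le hf)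

end Frontier

theorem stmt_14_general (n : ℕ) (f : (Fin n → ℝ) → ℝ)
    (hf : ∀ᵐ x : Fin n → ℝ ∂volume, ContinuousAt f x) :
    {z : ℝ | 0 < z ∧ volume (frontier {x | z ≤ f x}) ≠ 0}.Countable ∧
    ∀ᵐ z ∂(volume.restrict (Set.Ici (0 : ℝ))), volume (frontier {x | z ≤ f x}) = 0 := by
  have hcount := countable_setOf_measure_frontier_setOf_le_ne_zero hf
  refine ⟨hcount.mono fun _ hz => hz.2, ae_restrict_of_ae ?_⟩
  simpa only [ae_iff, not_not] using hcount.measure_zero volume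

/-- If `f : ℝⁿ → [0,∞)` is continuous almost everywhere, then for all but countably many
`z > 0` the boundary of the superlevel set `{x : f x ≥ z}` is Lebesgue-null; in particular
this holds for almost every `z ≥ 0`. -/
theorem stmt_14 (n : ℕ) (f : (Fin n → ℝ) → ℝ) (hf0 : 0 ≤ f)
    (hf : ∀ᵐ x : Fin n → ℝ ∂volume, ContinuousAt f x) :
    {z : ℝ | 0 < z ∧ volume (frontier {x | z ≤ f x}) ≠ 0}.Countable ∧
    ∀ᵐ z ∂(volume.restrict (Set.Ici (0 : ℝ))), volume (frontier {x | z ≤ f x}) = 0 :=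
  stmt_14_general n f hf
end
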